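/- Let C be a semiabelian category, A an object of C, and let i' : A' ⟶ A and i'' : A'' ⟶ A be strict monomorphisms such that every strict monomorphism m : M ⟶ A through which both i' and i'' factor is an isomorphism (i.e. A = A' ∪ A''). Set u := i'' ≫ cokernel.π i' : A'' ⟶ cokernel i'. Then there exists a morphism f : Coim(u) ⟶ cokernel i' that is both a monomorphism and an epimorphism and satisfies cokernel.π (kernel.ι u) ≫ f = u. (Since kernel u represents the infimum A' ∩ A'' of the strict subobjects A' and A'', this says there is a bijective morphism A''/(A' ∩ A'') ⟶ (A' ∪ A'')/A'.) -/
import Mathlib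


open CategoryTheory CategoryTheory.Limits

section Aux

variable {C : Type*} [Category C] [Preadditive C] [HasZeroObject C]
    [HasKernels C] [HasCokernels C]

/-- A kernel is a strict monomorphism: its coimage-image comparison is an isomorphism. -/
lemma aux_isIso_comparison_kernel_ι {X Y : C} (g : X ⟶ Y) :
    IsIso (Abelian.coimageImageComparison (kernel.ι g)) := by
  set m : kernel g ⟶ X := kernel.ι g
  have hker : kernel.ι m = 0 := zero_of_comp_mono m (kernel.condition m)
  -- the coimage projection is an isomorphism since `kernel.ι m = 0`
  have hq : IsIso (cokernel.π (kernel.ι m)) := by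
    refine ⟨cokernel.desc _ (𝟙 _) (by simp [hker]), ?_, ?_⟩
    · simp
    · apply coequalizer.hom_ext
      simp
  -- the canonical map to the image is an isomorphism
  have hι'g : kernel.ι (cokernel.π m) ≫ g = 0 := by
    have h1 : kernel.ι (cokernel.π m) ≫ g =
        kernel.ι (cokernel.π m) ≫ cokernel.π m ≫ cokernel.desc m g (kernel.condition g) := by
      rw [cokernel.π_desc]
    rw [h1, ← Category.assoc, kernel.condition, zero_comp]
  set k : kernel g ⟶ Abelian.image m :=
    kernel.lift (cokernel.π m) m (cokernel.condition m) with hk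
  set j : Abelian.image m ⟶ kernel g := kernel.lift g (kernel.ι (cokernel.π m)) hι'g with hj
  have hjm : j ≫ m = kernel.ι (cokernel.π m) := kernel.lift_ι _ _ _
  have hkι : k ≫ kernel.ι (cokernel.π m) = m := kernel.lift_ι _ _ _
  have hkj : k ≫ j = 𝟙 _ := by
    have : (k ≫ j) ≫ m = 𝟙 _ ≫ m := by
      rw [Category.assoc, hjm, hkι, Category.id_comp]
    exact Mono.right_cancellation _ _ this
  have hjk : j ≫ k = 𝟙 _ := by
    have : (j ≫ k) ≫ kernel.ι (cokernel.π m) = 𝟙 _ ≫ kernel.ι (cokernel.π m) := by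
      rw [Category.assoc, hkι, hjm, Category.id_comp]
    exact Mono.right_cancellation _ _ this
  have hkiso : IsIso k := ⟨j, hkj, hjk⟩
  -- the comparison equals `inv (coimage.π) ≫ k`
  have hcomp : Abelian.coimageImageComparison m = inv (cokernel.π (kernel.ι m)) ≫ k := by
    apply (cancel_mono (kernel.ι (cokernel.π m))).mp
    apply (cancel_epi (cokernel.π (kernel.ι m))).mp
    simp [hk]
  rw [hcomp]
  exact @IsIso.comp_isIso _ _ _ _ _ _ _ _ hkiso

end Aux

theorem stmt14 {C : Type*} [Category C] [Preadditive C] [HasZeroObject C]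
    [HasKernels C] [HasCokernels C] [HasFiniteProducts C]
    (hsemi : ∀ {X Y : C} (f : X ⟶ Y),
      Mono (Abelian.coimageImageComparison f) ∧ Epi (Abelian.coimageImageComparison f))
    {A A' A'' : C} (i' : A' ⟶ A) (i'' : A'' ⟶ A) [Mono i'] [Mono i'']
    (h' : IsIso (Abelian.coimageImageComparison i'))
    (h'' : IsIso (Abelian.coimageImageComparison i''))
    (hsup : ∀ (M : C) (m : M ⟶ A), Mono m → IsIso (Abelian.coimageImageComparison m) →
      (∃ t : A' ⟶ M, i' = t ≫ m) → (∃ t : A'' ⟶ M, i'' = t ≫ m) → IsIso m)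
    (u : A'' ⟶ cokernel i') (hu : u = i'' ≫ cokernel.π i') :
    ∃ f : cokernel (kernel.ι u) ⟶ cokernel i',
      Mono f ∧ Epi f ∧ cokernel.π (kernel.ι u) ≫ f = u := by
  -- Consider the strict subobject `kernel g` of `A`, where `g = π i' ≫ π u`.
  set g : A ⟶ cokernel u := cokernel.π i' ≫ cokernel.π u with hg
  have hi'g : i' ≫ g = 0 := by rw [hg, ← Category.assoc, cokernel.condition, zero_comp]
  have hi''g : i'' ≫ g = 0 := by
    rw [hg, ← Category.assoc, ← hu, cokernel.condition]
  have hm : IsIso (kernel.ι g) := by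
    refine hsup _ _ inferInstance (aux_isIso_comparison_kernel_ι g) ?_ ?_
    · exact ⟨kernel.lift g i' hi'g, (kernel.lift_ι g i' hi'g).symm⟩
    · exact ⟨kernel.lift g i'' hi''g, (kernel.lift_ι g i'' hi''g).symm⟩
  -- hence `g = 0`, so `cokernel.π u = 0`
  have hg0 : g = 0 := by
    have := kernel.condition g
    rw [← cancel_epi (kernel.ι g), this, comp_zero]
  have hπu : cokernel.π u = 0 := by
    have : cokernel.π i' ≫ cokernel.π u = cokernel.π i' ≫ 0 := by
      rw [comp_zero, ← hg, hg0]
    exact (cancel_epi (cokernel.π i')).mp this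
  -- so the image inclusion of `u` is a (split) epimorphism
  have hsplit : kernel.lift (cokernel.π u) (𝟙 _) (by rw [hπu, Category.id_comp]) ≫
      kernel.ι (cokernel.π u) = 𝟙 _ := kernel.lift_ι _ _ _
  have hepiι : Epi (kernel.ι (cokernel.π u)) :=
    have : IsSplitEpi (kernel.ι (cokernel.π u)) := IsSplitEpi.mk' ⟨_, hsplit⟩
    this.epi
  refine ⟨Abelian.coimageImageComparison u ≫ kernel.ι (cokernel.π u), ?_, ?_, ?_⟩
  · have := (hsemi u).1
    exact mono_comp _ _
  · have := (hsemi u).2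
    exact @epi_comp _ _ _ _ _ _ _ _ hepiι
  · exact Abelian.coimage_image_factorisation u
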